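/- If n ≥ 18, then d_2^max(C_n^2) = 3, i.e. every subgraph H of the square C_n^2 with at least 3 vertices satisfies e_H/(v_H − 2) ≤ 3, and this bound is attained by some subgraph. -/

import Mathlib

namespace RandomGraphs

/-- The `k`-th power of a graph: two vertices are adjacent iff their distance in `G`
is positive (they are distinct and reachable from each other) and at most `k`. -/
def graphPow {V : Type*} (G : SimpleGraph V) (k : ℕ) : SimpleGraph V where
  Adj u v := u ≠ v ∧ G.Reachable u v ∧ G.dist u v ≤ k
  symm := by
    refine ⟨fun u v h => ?_⟩
    exact ⟨h.1.symm, h.2.1.symm, by rw [SimpleGraph.dist_comm]; exact h.2.2⟩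
  loopless := by refine ⟨fun v h => ?_⟩; exact h.1 rfl

end RandomGraphs

open RandomGraphs

/-!
Every vertex `a` of `C_n²` has at most the four neighbours `a ± 1`, `a ± 2`, so by the handshake
lemma a subgraph with `v` vertices has at most `2v` edges, which is at most `3(v - 2)` once `v ≥ 6`.
If `v = 5 < n`, the vertex set is a proper subset of the cycle and so contains a vertex `a` with
`a + 1` missing; its degree is at most `3`, whence `2e ≤ 19`. If `v ≤ 4`, then `e ≤ v(v - 1)/2`.
Three consecutive vertices span a triangle, of 2-density `3 / (3 - 2) = 3`.
-/

namespace SimpleGraph.Subgraph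

variable {V : Type*} {G : SimpleGraph V}

theorem ncard_edgeSet_coe (H : G.Subgraph) : H.coe.edgeSet.ncard = H.edgeSet.ncard := by
  rw [← H.image_coe_edgeSet_coe,
    Set.ncard_image_of_injective _ (Sym2.map.injective Subtype.coe_injective)]

theorem sum_ncard_neighborSet (H : G.Subgraph) [Fintype H.verts] :
    ∑ v : H.verts, (H.neighborSet v).ncard = 2 * H.edgeSet.ncard := by
  classical
  rw [← ncard_edgeSet_coe, ← coe_edgeFinset, Set.ncard_coe_finset,
    ← H.coe.sum_degrees_eq_twice_card_edges]
  refine Finset.sum_congr rfl fun v _ => ?_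
  rw [H.coe_degree, ← finset_card_neighborSet_eq_degree, Set.ncard_eq_toFinset_card']

theorem ncard_neighborSet_lt_ncard_verts (H : G.Subgraph) (hfin : H.verts.Finite) {v : V}
    (hv : v ∈ H.verts) : (H.neighborSet v).ncard < H.verts.ncard :=
  Set.ncard_lt_ncard ⟨H.neighborSet_subset_verts v,
    fun h => (H.loopless.irrefl v) (h hv)⟩ hfin

theorem ncard_edgeSet_induce_top_of_isClique {s : Set V} (hs : G.IsClique s)
    (hfin : s.Finite) : ((⊤ : G.Subgraph).induce s).edgeSet.ncard = s.ncard.choose 2 := by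
  classical
  have := hfin.fintype
  rw [← ncard_edgeSet_coe, ← induce_eq_coe_induce_top]
  change (G.induce s).edgeSet.ncard = _
  rw [induce_eq_top.2 hs,
    ← coe_edgeFinset, Set.ncard_coe_finset, card_edgeFinset_top_eq_card_choose_two,
    Set.ncard_eq_toFinset_card', Set.toFinset_card]

end SimpleGraph.Subgraph

open scoped Fin.CommRing

theorem Fin.exists_mem_add_one_notMem {n : ℕ} [NeZero n] {S : Set (Fin n)}
    (hne : S.Nonempty) (hS : S ≠ Set.univ) : ∃ a ∈ S, a + 1 ∉ S := by
  by_contra! hclosed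
  obtain ⟨s, hs⟩ := hne
  have hmem : ∀ k : ℕ, s + k ∈ S := by
    intro k
    induction k with
    | zero => simpa using hs
    | succ k ih => rw [Nat.cast_succ, ← add_assoc]; exact hclosed _ ih
  refine hS (Set.eq_univ_of_forall fun x => ?_)
  simpa using hmem (x - s).val

namespace RandomGraphs

open SimpleGraph

theorem graphPow_adj_iff {V : Type*} {G : SimpleGraph V} {k : ℕ} {u v : V} :
    (graphPow G k).Adj u v ↔ u ≠ v ∧ ∃ p : G.Walk u v, p.length ≤ k :=
  ⟨fun ⟨hne, hr, hd⟩ => ⟨hne, hr.exists_walk_length_eq_dist.elim fun p hp => ⟨p, hp ▸ hd⟩⟩,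
    fun ⟨hne, p, hp⟩ => ⟨hne, p.reachable, (dist_le p).trans hp⟩⟩

-- Cycle lengths are written `n + 2`, the form in which Mathlib describes the neighbours in
-- `cycleGraph`.
variable {n : ℕ}

theorem neighborSet_graphPow_cycleGraph_two_subset (a : Fin (n + 2)) :
    (graphPow (cycleGraph (n + 2)) 2).neighborSet a ⊆
      ↑({a - 2, a - 1, a + 1, a + 2} : Finset _) := by
  intro b hb
  obtain ⟨hne, p, hp⟩ := graphPow_adj_iff.1 hb
  have hnbr : ∀ {x y : Fin (n + 2)}, (cycleGraph (n + 2)).Adj x y → y = x - 1 ∨ y = x + 1 := by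
    intro x y h
    simpa using (cycleGraph_neighborSet (v := x)).subset h
  rcases p with _ | ⟨h, _ | ⟨h', _ | _⟩⟩
  · exact absurd rfl hne
  · rcases hnbr h with rfl | rfl <;> simp
  · rcases hnbr h with rfl | rfl <;> rcases hnbr h' with rfl | rfl
    · simp only [Finset.coe_insert, Finset.coe_singleton, Set.mem_insert_iff]; left; ring
    · exact absurd (sub_add_cancel a 1).symm hne
    · exact absurd (add_sub_cancel_right a 1).symm hne
    · simp only [Finset.coe_insert, Finset.coe_singleton, Set.mem_insert_iff,
        Set.mem_singleton_iff]
      right; right; right; ring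
  · simp at hp

theorem ncard_neighborSet_le_four (H : (graphPow (cycleGraph (n + 2)) 2).Subgraph)
    (a : Fin (n + 2)) : (H.neighborSet a).ncard ≤ 4 :=
  (Set.ncard_le_ncard ((H.neighborSet_subset a).trans
    (neighborSet_graphPow_cycleGraph_two_subset a))).trans
      ((Set.ncard_coe_finset _).trans_le Finset.card_le_four)

theorem ncard_neighborSet_le_three (H : (graphPow (cycleGraph (n + 2)) 2).Subgraph)
    {a : Fin (n + 2)} (ha : a + 1 ∉ H.verts) : (H.neighborSet a).ncard ≤ 3 := by
  have hsub : H.neighborSet a ⊆ ↑({a - 2, a - 1, a + 2} : Finset _) := by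
    intro b hb
    have hb' := neighborSet_graphPow_cycleGraph_two_subset a (H.neighborSet_subset a hb)
    simp only [Finset.coe_insert, Finset.coe_singleton, Set.mem_insert_iff,
      Set.mem_singleton_iff] at hb' ⊢
    rcases hb' with h | h | rfl | h
    · exact .inl h
    · exact .inr (.inl h)
    · exact absurd (H.neighborSet_subset_verts a hb) ha
    · exact .inr (.inr h)
  exact (Set.ncard_le_ncard hsub).trans ((Set.ncard_coe_finset _).trans_le Finset.card_le_three)

theorem ncard_edgeSet_add_six_le (hn : 4 ≤ n) (H : (graphPow (cycleGraph (n + 2)) 2).Subgraph)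
    (hv : 3 ≤ H.verts.ncard) : H.edgeSet.ncard + 6 ≤ 3 * H.verts.ncard := by
  classical
  have : Fintype H.verts := Fintype.ofFinite _
  have hcard : Fintype.card H.verts = H.verts.ncard := by
    rw [← Nat.card_eq_fintype_card, Nat.card_coe_set_eq]
  have hsum := H.sum_ncard_neighborSet
  have hle : ∀ d, (∀ a ∈ H.verts, (H.neighborSet a).ncard ≤ d) →
      2 * H.edgeSet.ncard ≤ H.verts.ncard * d := by
    intro d hd
    rw [← hsum, ← hcard, ← smul_eq_mul, ← Finset.card_univ]
    exact Finset.sum_le_card_nsmul _ _ _ fun a _ => hd a a.2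
  obtain hsmall | h5 | hlarge : H.verts.ncard ≤ 4 ∨ H.verts.ncard = 5 ∨ 6 ≤ H.verts.ncard := by
    omega
  · have := hle (H.verts.ncard - 1) fun a ha =>
      Nat.le_sub_one_of_lt (H.ncard_neighborSet_lt_ncard_verts (Set.toFinite _) ha)
    interval_cases H.verts.ncard <;> omega
  · have hS : H.verts ≠ Set.univ := fun h => by
      rw [h, Set.ncard_univ, Nat.card_fin] at h5; omega
    obtain ⟨a, ha, ha1⟩ :=
      Fin.exists_mem_add_one_notMem (Set.nonempty_of_ncard_ne_zero (by omega)) hS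
    have : 2 * H.edgeSet.ncard < ∑ _b : H.verts, 4 := by
      rw [← hsum]
      exact Finset.sum_lt_sum (fun b _ => ncard_neighborSet_le_four H b)
        ⟨⟨a, ha⟩, Finset.mem_univ _, (ncard_neighborSet_le_three H ha1).trans_lt (by norm_num)⟩
    rw [Finset.sum_const, Finset.card_univ, hcard, h5, smul_eq_mul] at this
    omega
  · have := hle 4 fun a _ => ncard_neighborSet_le_four H a
    omega

theorem isNClique_graphPow_cycleGraph_two (hn : 1 ≤ n) (a : Fin (n + 2)) :
    (graphPow (cycleGraph (n + 2)) 2).IsNClique 3 {a, a + 1, a + 2} := by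
  have hadj : ∀ b : Fin (n + 2), (cycleGraph (n + 2)).Adj b (b + 1) := fun b =>
    cycleGraph_adj.2 (.inr (add_sub_cancel_left b 1))
  have h1 : ∀ b : Fin (n + 2), b ≠ b + 1 := by simp
  have h2 : a ≠ a + 2 := by
    simp [Fin.ext_iff, Nat.mod_eq_of_lt (show 2 < n + 2 by omega)]
  have hpow : ∀ b, (graphPow (cycleGraph (n + 2)) 2).Adj b (b + 1) := fun b =>
    graphPow_adj_iff.2 ⟨h1 b, (hadj b).toWalk, by simp⟩
  have htwo : ∀ b : Fin (n + 2), b + 1 + 1 = b + 2 := fun b => by ring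
  refine is3Clique_triple_iff.2 ⟨hpow a, graphPow_adj_iff.2 ⟨h2, ?_⟩, htwo a ▸ hpow (a + 1)⟩
  exact ⟨((hadj a).toWalk.concat (hadj (a + 1))).copy rfl (htwo a), by simp⟩

end RandomGraphs

open SimpleGraph

/-- If `n ≥ 18`, then `d₂^max (C_n²) = 3`: every subgraph `H` of the
square `C_n²` with at least 3 vertices satisfies `e_H/(v_H - 2) ≤ 3`, and this bound is
attained by some subgraph. -/
theorem two_density_cycle_square (n : ℕ) (hn : 18 ≤ n) :
    (∀ H : (graphPow (SimpleGraph.cycleGraph n) 2).Subgraph, 3 ≤ H.verts.ncard →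
      (H.edgeSet.ncard : ℝ) / ((H.verts.ncard : ℝ) - 2) ≤ 3) ∧
    (∃ H : (graphPow (SimpleGraph.cycleGraph n) 2).Subgraph, 3 ≤ H.verts.ncard ∧
      (H.edgeSet.ncard : ℝ) / ((H.verts.ncard : ℝ) - 2) = 3) := by
  obtain ⟨m, rfl⟩ : ∃ m, n = m + 2 := ⟨n - 2, by omega⟩
  refine ⟨fun H hv => ?_, ?_⟩
  · have hbound : (H.edgeSet.ncard : ℝ) + 6 ≤ 3 * H.verts.ncard := by
      exact_mod_cast ncard_edgeSet_add_six_le (by omega) H hv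
    have hv' : (3 : ℝ) ≤ H.verts.ncard := by exact_mod_cast hv
    rw [div_le_iff₀ (by linarith)]
    linarith
  · obtain ⟨s, hs⟩ : ∃ s, (graphPow (cycleGraph (m + 2)) 2).IsNClique 3 s :=
      ⟨_, isNClique_graphPow_cycleGraph_two (by omega) 0⟩
    have hverts : (s : Set (Fin (m + 2))).ncard = 3 := by rw [Set.ncard_coe_finset, hs.card_eq]
    refine ⟨(⊤ : Subgraph _).induce s, hverts.ge, ?_⟩
    rw [Subgraph.induce_verts, Subgraph.ncard_edgeSet_induce_top_of_isClique hs.isClique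
      s.finite_toSet, hverts]
    norm_num
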